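/- Let G=(V,A) be a directed graph with nonnegative arc weights and let u, v, w be three distinct vertices. Let P_v be a shortest path from u to v, and let x be the first vertex encountered on P_v after u. If there is a shortest path P_w from u to w that shares a common vertex other than u with P_v, then there is a shortest path P_w' from u to w that contains x. -/

import Mathlib

/-!
Let `z` be the first vertex of `Pv` after `u` that lies on `Pw`. The segment of `Pv` from `u`
to `z` is no heavier than that of `Pw`: otherwise following `Pw` to `z` and then `Pv` to `v`
would be a lighter walk, and erasing its loops (nonnegative weights) a lighter path. Hence
`Pv` up to `z` followed by `Pw` from `z` on is a shortest path to `t`; it is simple because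
`Pv` meets `Pw` before `z` only in `u`, and it passes through `x`, the vertex after `u` on `Pv`.
-/

/-- `IsDiPath A a b p` asserts that the list of vertices `p` is a simple directed
path from `a` to `b` in the directed graph with arc relation `A`. -/
def IsDiPath {V : Type*} (A : V → V → Prop) (a b : V) (p : List V) : Prop :=
  p.head? = some a ∧ p.getLast? = some b ∧ List.Chain' A p ∧ p.Nodup

/-- The arcs traversed by a path: the list of consecutive pairs of vertices. -/
def pathArcs {V : Type*} (p : List V) : List (V × V) :=
  p.zip p.tail

/-- The total weight of a path: the sum of the weights of its arcs. -/
def pathWeight {V : Type*} (w : V → V → ℝ) (p : List V) : ℝ :=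
  ((p.zip p.tail).map fun e => w e.1 e.2).sum

/-- `p` is a shortest (minimum total weight) directed path from `a` to `b`. -/
def IsShortestDiPath {V : Type*} (A : V → V → Prop) (w : V → V → ℝ) (a b : V)
    (p : List V) : Prop :=
  IsDiPath A a b p ∧ ∀ q, IsDiPath A a b q → pathWeight w p ≤ pathWeight w q

section Lists

variable {α : Type*}

lemma getLast?_append_cons (l : List α) (z : α) (e : List α) :
    (l ++ z :: e).getLast? = (z :: e).getLast? := by
  rw [List.getLast?_append, List.getLast?_cons, Option.some_or]

lemma head?_append_cons (l : List α) (z : α) (e : List α) :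
    (l ++ z :: e).head? = (l ++ [z]).head? := by
  cases l <;> rfl

lemma exists_eq_append_cons_first {S : α → Prop} :
    ∀ {l : List α} {y : α}, y ∈ l → S y →
      ∃ s z e, l = s ++ z :: e ∧ S z ∧ ∀ x ∈ s, ¬ S x
  | a :: l, y, hy, hSy => by
    by_cases hSa : S a
    · exact ⟨[], a, l, rfl, hSa, by simp⟩
    · obtain rfl | hy := List.mem_cons.mp hy
      · exact absurd hSy hSa
      obtain ⟨s, z, e, rfl, hSz, hs⟩ := exists_eq_append_cons_first hy hSy
      exact ⟨a :: s, z, e, rfl, hSz, by simpa [hSa] using hs⟩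

end Lists

section Paths

variable {V : Type*} {A : V → V → Prop} {w : V → V → ℝ}

@[simp]
lemma pathWeight_singleton (a : V) : pathWeight w [a] = 0 := rfl

@[simp]
lemma pathWeight_cons_cons (a b : V) (l : List V) :
    pathWeight w (a :: b :: l) = w a b + pathWeight w (b :: l) := by
  simp [pathWeight]

lemma pathWeight_append_cons (a : V) :
    ∀ p q : List V, pathWeight w (p ++ a :: q) = pathWeight w (p ++ [a]) + pathWeight w (a :: q)
  | [], _ => by simp
  | [_], _ => by simp
  | b :: c :: p, q => by
    have ih := pathWeight_append_cons a (c :: p) q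
    simp only [List.cons_append, pathWeight_cons_cons] at ih ⊢
    rw [ih, add_assoc]

lemma pathWeight_nonneg (hw : ∀ x y, A x y → 0 ≤ w x y) :
    ∀ {p : List V}, p.IsChain A → 0 ≤ pathWeight w p
  | [], _ | [_], _ => le_rfl
  | _ :: _ :: _, h => by
    rw [List.isChain_cons_cons] at h
    rw [pathWeight_cons_cons]
    exact add_nonneg (hw _ _ h.1) (pathWeight_nonneg hw h.2)

-- Loop erasure; with nonnegative weights each erased loop can only save weight.
lemma exists_isDiPath_pathWeight_le (hw : ∀ x y, A x y → 0 ≤ w x y) :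
    ∀ {a b : V} {p : List V}, p.head? = some a → p.getLast? = some b → p.IsChain A →
      ∃ q, IsDiPath A a b q ∧ pathWeight w q ≤ pathWeight w p
  | _, _, [], ha, _, _ => by simp at ha
  | a, b, [c], ha, hb, _ => by
    obtain rfl : c = a := by simpa using ha
    obtain rfl : c = b := by simpa using hb
    exact ⟨[c], ⟨rfl, rfl, List.isChain_singleton c, List.nodup_singleton c⟩, le_rfl⟩
  | a, b, c :: d :: p, ha, hb, hp => by
    obtain rfl : c = a := by simpa using ha
    rw [List.isChain_cons_cons] at hp
    obtain ⟨q, ⟨hqd, hqb, hqA, hqnd⟩, hqw⟩ :=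
      exists_isDiPath_pathWeight_le hw (p := d :: p) rfl (by simpa using hb) hp.2
    have hcd := hw _ _ hp.1
    rw [pathWeight_cons_cons]
    by_cases hcq : c ∈ q
    · -- cut the loop that returns to `c`
      obtain ⟨q₁, q₂, rfl⟩ := List.append_of_mem hcq
      refine ⟨c :: q₂, ⟨rfl, ?_, hqA.suffix (List.suffix_append _ _),
        hqnd.sublist (List.sublist_append_right _ _)⟩, ?_⟩
      · rwa [getLast?_append_cons] at hqb
      · rw [pathWeight_append_cons] at hqw
        linarith [pathWeight_nonneg hw (hqA.prefix (by simp : (q₁ ++ [c]) <+: q₁ ++ c :: q₂))]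
    · obtain ⟨q', rfl⟩ : ∃ q', q = d :: q' := by
        cases q with
        | nil => simp at hqd
        | cons e q' => exact ⟨q', by simpa using hqd⟩
      refine ⟨c :: d :: q', ⟨rfl, by simpa using hqb, List.isChain_cons_cons.mpr ⟨hp.1, hqA⟩,
        List.nodup_cons.mpr ⟨hcq, hqnd⟩⟩, ?_⟩
      rw [pathWeight_cons_cons]
      linarith

lemma IsShortestDiPath.pathWeight_le_of_isChain (hw : ∀ x y, A x y → 0 ≤ w x y) {a b : V}
    {p q : List V} (hp : IsShortestDiPath A w a b p) (ha : q.head? = some a)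
    (hb : q.getLast? = some b) (hq : q.IsChain A) : pathWeight w p ≤ pathWeight w q := by
  obtain ⟨q', hq', hw'⟩ := exists_isDiPath_pathWeight_le hw ha hb hq
  exact (hp.2 q' hq').trans hw'

lemma IsShortestDiPath.pathWeight_prefix_le (hw : ∀ x y, A x y → 0 ≤ w x y) {a b z : V}
    {p e q : List V} (hp : IsShortestDiPath A w a b (p ++ z :: e))
    (ha : (q ++ [z]).head? = some a) (hq : (q ++ [z]).IsChain A) :
    pathWeight w (p ++ [z]) ≤ pathWeight w (q ++ [z]) := by
  have hdetour := hp.pathWeight_le_of_isChain hw (q := q ++ z :: e)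
    (by rwa [head?_append_cons]) (by rw [getLast?_append_cons, ← hp.1.2.1, getLast?_append_cons])
    (List.isChain_split.mpr ⟨hq, (List.isChain_split.mp hp.1.2.2.1).2⟩)
  rw [pathWeight_append_cons z p e, pathWeight_append_cons z q e] at hdetour
  linarith

lemma IsShortestDiPath.splice (hw : ∀ x y, A x y → 0 ≤ w x y) {a b c z : V}
    {p e q f : List V} (hp : IsShortestDiPath A w a b (p ++ z :: e))
    (hq : IsShortestDiPath A w a c (q ++ z :: f)) (hdisj : p.Disjoint (z :: f)) :
    IsShortestDiPath A w a c (p ++ z :: f) := by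
  obtain ⟨⟨hpa, -, hpA, hpnd⟩, -⟩ := id hp
  obtain ⟨⟨hqa, hqc, hqA, hqnd⟩, hqmin⟩ := hq
  replace hpA := List.isChain_split.mp hpA
  replace hqA := List.isChain_split.mp hqA
  have hprefix := hp.pathWeight_prefix_le hw (by rwa [← head?_append_cons]) hqA.1
  refine ⟨⟨by rwa [head?_append_cons] at hpa ⊢, by rwa [getLast?_append_cons] at hqc ⊢,
    List.isChain_split.mpr ⟨hpA.1, hqA.2⟩, ?_⟩, fun r hr => ?_⟩
  · exact List.nodup_append'.mpr ⟨(List.nodup_append'.mp hpnd).1,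
      (List.nodup_append'.mp hqnd).2.1, hdisj⟩
  · have := hqmin r hr
    rw [pathWeight_append_cons] at this ⊢
    linarith

end Paths

theorem shortest_path_through_first_vertex_general
    {V : Type*} (A : V → V → Prop) (w : V → V → ℝ)
    (hw : ∀ x y, A x y → 0 ≤ w x y)
    (u v t : V)
    (Pv : List V) (hPv : IsShortestDiPath A w u v Pv)
    (x : V) (hx : Pv.tail.head? = some x)
    (Pw : List V) (hPw : IsShortestDiPath A w u t Pw)
    (y : V) (hyPv : y ∈ Pv) (hyPw : y ∈ Pw) (hyu : y ≠ u) :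
    ∃ Pw', IsShortestDiPath A w u t Pw' ∧ x ∈ Pw' := by
  obtain ⟨pw, rfl⟩ := List.head?_eq_some_iff.mp hPw.1.1
  have hu : u ∉ pw := (List.nodup_cons.mp hPw.1.2.2.2).1
  -- split `Pv` at its first vertex `z ≠ u` that lies on `Pw`
  obtain ⟨p, z, e, rfl, hz, hp⟩ :=
    exists_eq_append_cons_first (S := (· ∈ pw)) hyPv ((List.mem_cons.mp hyPw).resolve_left hyu)
  obtain ⟨r, f, rfl⟩ := List.append_of_mem hz
  refine ⟨p ++ z :: f, hPv.splice hw (q := u :: r) hPw fun a hap haf => hp a hap ?_, ?_⟩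
  · exact List.mem_append_right r haf
  · obtain ⟨s, rfl⟩ : ∃ s, p = u :: s := by
      cases p with
      | nil => exact absurd (by simpa using hPv.1.1) (ne_of_mem_of_not_mem hz hu)
      | cons a s => exact ⟨s, by simpa using hPv.1.1⟩
    cases s <;> simp_all

/-- If `Pv` is a shortest path from `u` to `v` whose first vertex
after `u` is `x`, and some shortest path `Pw` from `u` to `t` shares a vertex other
than `u` with `Pv`, then there is a shortest path from `u` to `t` containing `x`. -/
theorem shortest_path_through_first_vertex
    {V : Type*} (A : V → V → Prop) (w : V → V → ℝ)
    (hw : ∀ x y, A x y → 0 ≤ w x y)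
    (u v t : V) (huv : u ≠ v) (hut : u ≠ t) (hvt : v ≠ t)
    (Pv : List V) (hPv : IsShortestDiPath A w u v Pv)
    (x : V) (hx : Pv.tail.head? = some x)
    (Pw : List V) (hPw : IsShortestDiPath A w u t Pw)
    (y : V) (hyPv : y ∈ Pv) (hyPw : y ∈ Pw) (hyu : y ≠ u) :
    ∃ Pw', IsShortestDiPath A w u t Pw' ∧ x ∈ Pw' :=
  shortest_path_through_first_vertex_general A w hw u v t Pv hPv x hx Pw hPw y hyPv hyPw hyu
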